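/- Let n ≥ 1, let H and B be Hermitian n×n complex matrices, let β > 0, and let C be any n×n complex matrix. Set Z = tr(exp(−βH)) (which is a positive real). Then the function δ ↦ tr(C · exp(−βH + δB)) / tr(exp(−βH + δB)) (δ ∈ ℝ) has derivative at δ = 0 equal to (1/β)∫_{λ∈[0,β]} tr(C · exp(−(β−λ)H) · B · exp(−λH)) dλ / Z − (tr(C·exp(−βH))/Z)·(tr(B·exp(−βH))/Z). (Kubo linear-response formula: applied to C = exp(itH) A exp(−itH), this gives Eq. (1) of the paper, ∂_δ⟨A(t)⟩_δ|_{δ=0} = ∫_0^β (dλ/β) ⟨A(t) ρ(β−λ) B ρ(β−λ)^{−1}⟩ − ⟨A(t)⟩⟨B⟩ with ρ(x) = exp(−xH).) -/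

import Mathlib

open MeasureTheory Matrix

attribute [local instance] Matrix.linftyOpNormedAddCommGroup Matrix.linftyOpNormedSpace
  Matrix.linftyOpNormedRing Matrix.linftyOpNormedAlgebra

/-!
By Duhamel's formula `exp M - exp A = ∫₀¹ exp (sM) (M - A) exp ((1-s)A) ds`, the path
`δ ↦ exp (A + δB)` has derivative `∫₀¹ exp (sA) B exp ((1-s)A) ds` at `δ = 0`. Composing with the
linear functionals `X ↦ tr (C X)` and `tr`, the quotient rule gives the formula: with `A = -βH`
the substitution `λ = (1-s)β` turns the numerator into the integral over `[0, β]`, while for the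
denominator the integrand is constant, equal to `tr (B exp A)`, by cyclicity of the trace.
The partition function does not vanish since `exp A = exp (A/2)ᴴ exp (A/2)` for Hermitian `A`
and `exp (A/2)` is invertible.
-/

open NormedSpace

section BanachAlgebra

variable {𝔸 : Type*} [NormedRing 𝔸] [NormedAlgebra ℝ 𝔸] [CompleteSpace 𝔸]

theorem continuous_exp_smul_mul_mul_exp_one_sub_smul (M X A : 𝔸) :
    Continuous fun s : ℝ => exp (s • M) * X * exp ((1 - s) • A) :=
  ((differentiable_exp_smul_const ℝ M).continuous.mul continuous_const).mul
    ((differentiable_exp_smul_const ℝ A).continuous.comp (continuous_const.sub continuous_id))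

theorem exp_sub_exp_eq_integral (A M : 𝔸) :
    exp M - exp A = ∫ s in (0 : ℝ)..1, exp (s • M) * (M - A) * exp ((1 - s) • A) := by
  have hderiv (s : ℝ) : HasDerivAt (fun s : ℝ => exp (s • M) * exp ((1 - s) • A))
      (exp (s • M) * (M - A) * exp ((1 - s) • A)) s := by
    have hM := hasDerivAt_exp_smul_const M s
    have hA := (hasDerivAt_exp_smul_const' A (1 - s)).scomp s ((hasDerivAt_id s).const_sub 1)
    refine (hM.mul hA).congr_deriv ?_
    simp only [Function.comp_apply, neg_one_smul]
    noncomm_ring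
  rw [intervalIntegral.integral_eq_sub_of_hasDerivAt (fun s _ => hderiv s)
    ((continuous_exp_smul_mul_mul_exp_one_sub_smul M (M - A) A).intervalIntegrable 0 1)]
  simp

theorem hasDerivAt_exp_add_smul (A B : 𝔸) :
    HasDerivAt (fun δ : ℝ => exp (A + δ • B))
      (∫ s in (0 : ℝ)..1, exp (s • A) * B * exp ((1 - s) • A)) 0 := by
  -- `exp_continuous` asks for a normed `ℚ`-algebra structure; `exp` itself does not depend on it.
  let +nondep : NormedAlgebra ℚ 𝔸 := .restrictScalars ℚ ℝ 𝔸
  set Φ : ℝ → 𝔸 := fun δ => ∫ s in (0 : ℝ)..1, exp (s • (A + δ • B)) * B * exp ((1 - s) • A)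
  have hslope (δ : ℝ) : exp (A + δ • B) - exp A = δ • Φ δ := by
    rw [exp_sub_exp_eq_integral, add_sub_cancel_left, ← intervalIntegral.integral_smul]
    simp only [mul_smul_comm, smul_mul_assoc]
  have hΦ : Continuous Φ :=
    intervalIntegral.continuous_parametric_intervalIntegral_of_continuous' (by fun_prop) 0 1
  rw [show (∫ s in (0 : ℝ)..1, exp (s • A) * B * exp ((1 - s) • A)) = Φ 0 by simp [Φ],
    hasDerivAt_iff_tendsto_slope]
  refine ((hΦ.tendsto 0).mono_left nhdsWithin_le_nhds).congr' ?_
  filter_upwards [self_mem_nhdsWithin] with δ (hδ : δ ≠ 0)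
  rw [slope_def_module, zero_smul, add_zero, hslope, sub_zero, inv_smul_smul₀ hδ]

end BanachAlgebra

namespace Matrix

variable {m : Type*} [Fintype m] [DecidableEq m]

theorem hasDerivAt_trace_mul_exp_add_smul (A B C : Matrix m m ℂ) :
    HasDerivAt (fun δ : ℝ => (C * exp (A + δ • B)).trace)
      (∫ s in (0 : ℝ)..1, (C * exp (s • A) * B * exp ((1 - s) • A)).trace) 0 := by
  let L : Matrix m m ℂ →L[ℝ] ℂ :=
    ((traceLinearMap m ℝ ℂ).comp (LinearMap.mulLeft ℝ C)).toContinuousLinearMap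
  have hL := L.hasFDerivAt.comp_hasDerivAt 0 (hasDerivAt_exp_add_smul A B)
  rw [← L.intervalIntegral_comp_comm
    ((continuous_exp_smul_mul_mul_exp_one_sub_smul A B A).intervalIntegrable 0 1)] at hL
  exact hL.congr_deriv (intervalIntegral.integral_congr fun s _ => by
    simp only [L, Matrix.mul_assoc]; rfl)

theorem integral_trace_exp_smul_mul_exp_one_sub_smul (A B : Matrix m m ℂ) :
    ∫ s in (0 : ℝ)..1, (exp (s • A) * B * exp ((1 - s) • A)).trace = (B * exp A).trace := by
  have hconst (s : ℝ) : (exp (s • A) * B * exp ((1 - s) • A)).trace = (B * exp A).trace := by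
    rw [trace_mul_cycle, trace_mul_comm,
      ← exp_add_of_commute _ _ (((Commute.refl A).smul_left _).smul_right _), ← add_smul,
      sub_add_cancel, one_smul]
  simp [hconst]

open scoped ComplexOrder in
theorem IsHermitian.trace_exp_ne_zero [Nonempty m] {A : Matrix m m ℂ} (hA : A.IsHermitian) :
    (NormedSpace.exp A).trace ≠ 0 := by
  set X := NormedSpace.exp ((2⁻¹ : ℝ) • A)
  have hX : NormedSpace.exp A = Xᴴ * X := by
    rw [(hA.smul (IsSelfAdjoint.all _)).exp.eq, ← exp_add_of_commute _ _ (Commute.refl _),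
      ← add_smul]
    norm_num
  rw [hX, Ne, trace_conjTranspose_mul_self_eq_zero_iff]
  exact (isUnit_exp _).ne_zero

end Matrix

theorem integral_comp_one_sub_mul_eq_inv_smul_integral_Icc {E : Type*} [NormedAddCommGroup E]
    [NormedSpace ℝ E] (f : ℝ → E) {β : ℝ} (hβ : 0 < β) :
    ∫ s in (0 : ℝ)..1, f ((1 - s) * β) = β⁻¹ • ∫ l in Set.Icc 0 β, f l := by
  rw [intervalIntegral.integral_comp_sub_left (fun u => f (u * β)),
    intervalIntegral.integral_comp_mul_right f hβ.ne',
    intervalIntegral.integral_of_le (by simpa using hβ.le), ← integral_Icc_eq_integral_Ioc]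
  simp

theorem kubo_linear_response_general (n : ℕ) (hn : 1 ≤ n)
    (H B C : Matrix (Fin n) (Fin n) ℂ)
    (hH : H.IsHermitian) (β : ℝ) (hβ : 0 < β) :
    HasDerivAt
      (fun δ : ℝ =>
        (C * NormedSpace.exp ((-β) • H + δ • B)).trace /
          (NormedSpace.exp ((-β) • H + δ • B)).trace)
      ((β : ℂ)⁻¹ *
          (∫ l in Set.Icc (0 : ℝ) β,
            (C * NormedSpace.exp ((-(β - l)) • H) * B * NormedSpace.exp ((-l) • H)).trace) /
          (NormedSpace.exp ((-β) • H)).trace -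
        ((C * NormedSpace.exp ((-β) • H)).trace / (NormedSpace.exp ((-β) • H)).trace) *
          ((B * NormedSpace.exp ((-β) • H)).trace / (NormedSpace.exp ((-β) • H)).trace))
      0 := by
  have : Nonempty (Fin n) := Fin.pos_iff_nonempty.mp hn
  have hZ := (hH.smul (IsSelfAdjoint.all (-β))).trace_exp_ne_zero
  have hnum := hasDerivAt_trace_mul_exp_add_smul ((-β) • H) B C
  have hden := hasDerivAt_trace_mul_exp_add_smul ((-β) • H) B 1
  simp only [Matrix.one_mul, integral_trace_exp_smul_mul_exp_one_sub_smul] at hden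
  have hrescale (s : ℝ) : (C * exp (s • (-β) • H) * B * exp ((1 - s) • (-β) • H)).trace =
      (C * exp (-(β - (1 - s) * β) • H) * B * exp (-((1 - s) * β) • H)).trace := by
    simp only [smul_smul]
    ring_nf
  rw [intervalIntegral.integral_congr fun s _ => hrescale s,
    integral_comp_one_sub_mul_eq_inv_smul_integral_Icc
      (fun l => (C * exp (-(β - l) • H) * B * exp (-l • H)).trace) hβ,
    Complex.real_smul, Complex.ofReal_inv] at hnum
  refine (hnum.div hden (by simpa using hZ)).congr_deriv ?_
  simp only [zero_smul, add_zero]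
  field_simp

/-- **Kubo linear-response formula**: for Hermitian `H`, `B`, inverse temperature `β > 0`
and any matrix `C`, the derivative at `δ = 0` of
`δ ↦ tr (C exp (−βH + δB)) / tr (exp (−βH + δB))` equals
`(1/β) ∫_{λ∈[0,β]} tr (C exp(−(β−λ)H) B exp(−λH)) dλ / Z − (tr(C e^{−βH})/Z)(tr(B e^{−βH})/Z)`
where `Z = tr (exp (−βH))`. -/
theorem kubo_linear_response (n : ℕ) (hn : 1 ≤ n)
    (H B C : Matrix (Fin n) (Fin n) ℂ)
    (hH : H.IsHermitian) (hB : B.IsHermitian) (β : ℝ) (hβ : 0 < β) :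
    HasDerivAt
      (fun δ : ℝ =>
        (C * NormedSpace.exp ((-β) • H + δ • B)).trace /
          (NormedSpace.exp ((-β) • H + δ • B)).trace)
      ((β : ℂ)⁻¹ *
          (∫ l in Set.Icc (0 : ℝ) β,
            (C * NormedSpace.exp ((-(β - l)) • H) * B * NormedSpace.exp ((-l) • H)).trace) /
          (NormedSpace.exp ((-β) • H)).trace -
        ((C * NormedSpace.exp ((-β) • H)).trace / (NormedSpace.exp ((-β) • H)).trace) *
          ((B * NormedSpace.exp ((-β) • H)).trace / (NormedSpace.exp ((-β) • H)).trace))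
      0 :=
  kubo_linear_response_general n hn H B C hH β hβ
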